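/- arXiv:cs/0209032 — 2 statements merged into one kernel-verified Lean document; each statement's English description precedes it below -/
import Mathlib

section
/- For the formula G = { x_i ∨ ¬y_i, ¬x_i ∨ y_i | 1 ≤ i ≤ n } ∪ F, every variable of G occurs both positively and negatively in G, so the monotone literal rule is inapplicable to G; moreover under any partial assignment either both clauses x_i ∨ ¬y_i and ¬x_i ∨ y_i remain or unit propagation assigns both x_i and y_i, so the monotone literal rule can never be applied during a DPLL run on G. -/
/-- A literal over a variable type `V`. -/
abbrev Lit (V : Type) := V × Bool

/-- The variables occurring in a formula. -/
def fvars {V : Type} (F : Set (Set (Lit V))) : Set V :=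
  {v | ∃ C ∈ F, ∃ b, (v, b) ∈ C}

/-- Simplification of a formula under a partial assignment `I` (a set of
literals): clauses containing a literal of `I` are removed, and literals whose
negation is in `I` are deleted from the remaining clauses. -/
def restrictSet {V : Type} (F : Set (Set (Lit V))) (I : Set (Lit V)) :
    Set (Set (Lit V)) :=
  {C' | ∃ C ∈ F, (∀ l ∈ C, l ∉ I) ∧ C' = {l | l ∈ C ∧ (l.1, !l.2) ∉ I}}

/-- The variable `v` is assigned by the partial assignment `I`. -/
def assigned {V : Type} (v : V) (I : Set (Lit V)) : Prop := ∃ b, (v, b) ∈ I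

/-- `G = { xᵢ ∨ ¬yᵢ, ¬xᵢ ∨ yᵢ | 1 ≤ i ≤ n } ∪ F`, with `xᵢ = Sum.inl i` and
`yᵢ = Sum.inr i`. -/
def mkG {n : ℕ} (F : Set (Set (Lit (Fin n ⊕ Fin n)))) :
    Set (Set (Lit (Fin n ⊕ Fin n))) :=
  (⋃ i : Fin n,
    ({{(Sum.inl i, true), (Sum.inr i, false)},
      {(Sum.inl i, false), (Sum.inr i, true)}} : Set (Set (Lit (Fin n ⊕ Fin n))))) ∪ F
lemma mem_mkG1 {n : ℕ} (F : Set (Set (Lit (Fin n ⊕ Fin n)))) (i : Fin n) :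
    ({(Sum.inl i, true), (Sum.inr i, false)} : Set (Lit (Fin n ⊕ Fin n))) ∈ mkG F :=
  Or.inl (Set.mem_iUnion.2 ⟨i, Or.inl rfl⟩)

lemma mem_mkG2 {n : ℕ} (F : Set (Set (Lit (Fin n ⊕ Fin n)))) (i : Fin n) :
    ({(Sum.inl i, false), (Sum.inr i, true)} : Set (Lit (Fin n ⊕ Fin n))) ∈ mkG F :=
  Or.inl (Set.mem_iUnion.2 ⟨i, Or.inr rfl⟩)

/-- Every variable of `G` occurs both positively and negatively (so the
monotone literal rule is inapplicable to `G`); moreover, under any consistent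
partial assignment: if neither `xᵢ` nor `yᵢ` is assigned then both clauses
`xᵢ ∨ ¬yᵢ` and `¬xᵢ ∨ yᵢ` remain, and if exactly one of them is assigned then
the restricted formula contains a unit clause by which unit propagation
assigns the other the same value — so the monotone literal rule can never be
applied during a DPLL run on `G`. -/
theorem mkG_no_monotone {n : ℕ} (F : Set (Set (Lit (Fin n ⊕ Fin n))))
    (hF : ∀ C ∈ F, ∀ l ∈ C, ∃ v : Fin n, l.1 = Sum.inl v) :
    (∀ v ∈ fvars (mkG F),
        (∃ C ∈ mkG F, (v, true) ∈ C) ∧ (∃ C ∈ mkG F, (v, false) ∈ C)) ∧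
    (∀ I : Set (Lit (Fin n ⊕ Fin n)),
      (∀ v, ¬ ((v, true) ∈ I ∧ (v, false) ∈ I)) →
      ∀ i : Fin n,
        ((¬ assigned (Sum.inl i) I ∧ ¬ assigned (Sum.inr i) I →
            ({(Sum.inl i, true), (Sum.inr i, false)} : Set (Lit (Fin n ⊕ Fin n)))
              ∈ restrictSet (mkG F) I ∧
            ({(Sum.inl i, false), (Sum.inr i, true)} : Set (Lit (Fin n ⊕ Fin n)))
              ∈ restrictSet (mkG F) I) ∧
         (∀ b : Bool, (Sum.inl i, b) ∈ I → ¬ assigned (Sum.inr i) I →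
            ({((Sum.inr i : Fin n ⊕ Fin n), b)} : Set (Lit (Fin n ⊕ Fin n)))
              ∈ restrictSet (mkG F) I) ∧
         (∀ b : Bool, (Sum.inr i, b) ∈ I → ¬ assigned (Sum.inl i) I →
            ({((Sum.inl i : Fin n ⊕ Fin n), b)} : Set (Lit (Fin n ⊕ Fin n)))
              ∈ restrictSet (mkG F) I))) := by
  constructor
  · rintro (i | i) -
    · exact ⟨⟨_, mem_mkG1 F i, Or.inl rfl⟩, ⟨_, mem_mkG2 F i, Or.inl rfl⟩⟩
    · exact ⟨⟨_, mem_mkG2 F i, Or.inr rfl⟩, ⟨_, mem_mkG1 F i, Or.inr rfl⟩⟩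
  · intro I hI i
    refine ⟨?_, ?_, ?_⟩
    · rintro ⟨hx, hy⟩
      constructor
      · refine ⟨_, mem_mkG1 F i, ?_, ?_⟩
        · rintro l (rfl | rfl) hl
          · exact hx ⟨true, hl⟩
          · exact hy ⟨false, hl⟩
        · ext l
          simp only [Set.mem_setOf_eq, iff_self_and]
          rintro (rfl | rfl) hl
          · exact hx ⟨false, hl⟩
          · exact hy ⟨true, hl⟩
      · refine ⟨_, mem_mkG2 F i, ?_, ?_⟩
        · rintro l (rfl | rfl) hl
          · exact hx ⟨false, hl⟩
          · exact hy ⟨true, hl⟩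
        · ext l
          simp only [Set.mem_setOf_eq, iff_self_and]
          rintro (rfl | rfl) hl
          · exact hx ⟨true, hl⟩
          · exact hy ⟨false, hl⟩
    · intro b hb hy
      refine ⟨{(Sum.inl i, !b), (Sum.inr i, b)}, ?_, ?_, ?_⟩
      · cases b
        · exact mem_mkG1 F i
        · exact mem_mkG2 F i
      · rintro l (rfl | rfl) hl
        · cases b
          · exact hI (Sum.inl i) ⟨hl, hb⟩
          · exact hI (Sum.inl i) ⟨hb, hl⟩
        · exact hy ⟨b, hl⟩
      · ext l
        simp only [Set.mem_setOf_eq, Set.mem_singleton_iff, Set.mem_insert_iff]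
        constructor
        · rintro rfl
          exact ⟨Or.inr rfl, fun h => hy ⟨!b, h⟩⟩
        · rintro ⟨rfl | rfl, hnl⟩
          · exact absurd hb (by simpa using hnl)
          · rfl
    · intro b hb hx
      refine ⟨{(Sum.inl i, b), (Sum.inr i, !b)}, ?_, ?_, ?_⟩
      · cases b
        · exact mem_mkG2 F i
        · exact mem_mkG1 F i
      · rintro l (rfl | rfl) hl
        · exact hx ⟨b, hl⟩
        · cases b
          · exact hI (Sum.inr i) ⟨hl, hb⟩
          · exact hI (Sum.inr i) ⟨hb, hl⟩
      · ext l
        simp only [Set.mem_setOf_eq, Set.mem_singleton_iff, Set.mem_insert_iff]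
        constructor
        · rintro rfl
          exact ⟨Or.inl rfl, fun h => hx ⟨!b, h⟩⟩
        · rintro ⟨rfl | rfl, hnl⟩
          · rfl
          · exact absurd hb (by simpa using hnl)
end

section
/- If formulas F and H share no variables, then every resolution refutation of F ∪ H uses only clauses of F or only clauses of H as leaves; in particular the minimal regular resolution refutation size of F ∪ H is the minimum of the minimal refutation sizes of F and H (where the size of a satisfiable formula's refutation is ∞). -/
/-- A clause: a set of literals over natural-number variables. -/
abbrev Clause := Set (ℕ × Bool)
/-- A CNF formula: a set of clauses. -/
abbrev CNF := Set Clause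

/-- The variables occurring in a formula. -/
def CNF.vars (F : CNF) : Set ℕ := {v | ∃ C ∈ F, ∃ b, (v, b) ∈ C}

/-- `RegRes F A C n`: the clause `C` has a regular resolution derivation of
size `n` (number of clauses in the derivation) from leaves that are clauses of
`F`, in which no variable of `A` is resolved upon, and along every path no
variable is resolved upon twice.  A regular resolution refutation of `F` of
size `n` is `RegRes F ∅ ∅ n`. -/
inductive RegRes (F : CNF) : Set ℕ → Clause → ℕ → Prop where
  | leaf {A : Set ℕ} {C : Clause} : C ∈ F → RegRes F A C 1
  | res {A : Set ℕ} {C D : Clause} {x : ℕ} {n m : ℕ} :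
      x ∉ A → (x, true) ∈ C → (x, false) ∈ D →
      RegRes F (insert x A) C n → RegRes F (insert x A) D m →
      RegRes F A ((C \ {(x, true)}) ∪ (D \ {(x, false)})) (n + m + 1)

/-- The minimal size of a regular resolution refutation of `F`
(`∞` if there is none, in particular if `F` is satisfiable). -/
noncomputable def rsize (F : CNF) : ℕ∞ :=
  sInf {n : ℕ∞ | ∃ m : ℕ, n = (m : ℕ∞) ∧ RegRes F ∅ ∅ m}

lemma RegRes.mono {F G : CNF} (hFG : F ⊆ G) {A : Set ℕ} {C : Clause} {n : ℕ}
    (h : RegRes F A C n) : RegRes G A C n := by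
  induction h with
  | leaf h => exact .leaf (hFG h)
  | res hx hC hD _ _ ih1 ih2 => exact .res hx hC hD ih1 ih2

lemma RegRes.split {F H : CNF} (hdisj : Disjoint (CNF.vars F) (CNF.vars H))
    {A : Set ℕ} {C : Clause} {n : ℕ} (h : RegRes (F ∪ H) A C n) :
    (RegRes F A C n ∧ ∀ v b, (v, b) ∈ C → v ∈ CNF.vars F) ∨
    (RegRes H A C n ∧ ∀ v b, (v, b) ∈ C → v ∈ CNF.vars H) := by
  induction h with
  | @leaf A C h =>
    rcases h with h | h
    · exact Or.inl ⟨.leaf h, fun v b hvb => ⟨C, h, b, hvb⟩⟩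
    · exact Or.inr ⟨.leaf h, fun v b hvb => ⟨C, h, b, hvb⟩⟩
  | @res A C D x n m hx hC hD h1 h2 ih1 ih2 =>
    rcases ih1 with ⟨r1, v1⟩ | ⟨r1, v1⟩ <;> rcases ih2 with ⟨r2, v2⟩ | ⟨r2, v2⟩
    · refine Or.inl ⟨.res hx hC hD r1 r2, fun v b hvb => ?_⟩
      rcases hvb with ⟨h, _⟩ | ⟨h, _⟩
      · exact v1 v b h
      · exact v2 v b h
    · exact absurd (hdisj.ne_of_mem (v1 x true hC) (v2 x false hD)) (by simp)
    · exact absurd (hdisj.ne_of_mem (v2 x false hD) (v1 x true hC)) (by simp)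
    · refine Or.inr ⟨.res hx hC hD r1 r2, fun v b hvb => ?_⟩
      rcases hvb with ⟨h, _⟩ | ⟨h, _⟩
      · exact v1 v b h
      · exact v2 v b h

/-- If `F` and `H` share no variables, every resolution refutation of `F ∪ H`
uses only clauses of `F`, or only clauses of `H`, as leaves — it is a
refutation of `F` alone or of `H` alone of the same size; consequently the
minimal regular resolution refutation size of `F ∪ H` is the minimum of those
of `F` and `H`. -/
theorem refutation_union (F H : CNF)
    (hdisj : Disjoint (CNF.vars F) (CNF.vars H)) :
    (∀ n : ℕ, RegRes (F ∪ H) ∅ (∅ : Clause) n →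
      RegRes F ∅ (∅ : Clause) n ∨ RegRes H ∅ (∅ : Clause) n) ∧
    rsize (F ∪ H) = min (rsize F) (rsize H) := by
  have key : ∀ n : ℕ, RegRes (F ∪ H) ∅ (∅ : Clause) n →
      RegRes F ∅ (∅ : Clause) n ∨ RegRes H ∅ (∅ : Clause) n := by
    intro n h
    rcases h.split hdisj with ⟨r, _⟩ | ⟨r, _⟩
    · exact Or.inl r
    · exact Or.inr r
  refine ⟨key, ?_⟩
  have hset : {n : ℕ∞ | ∃ m : ℕ, n = (m : ℕ∞) ∧ RegRes (F ∪ H) ∅ ∅ m} =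
      {n : ℕ∞ | ∃ m : ℕ, n = (m : ℕ∞) ∧ RegRes F ∅ ∅ m} ∪
      {n : ℕ∞ | ∃ m : ℕ, n = (m : ℕ∞) ∧ RegRes H ∅ ∅ m} := by
    ext n
    constructor
    · rintro ⟨m, rfl, h⟩
      rcases key m h with h | h
      · exact Or.inl ⟨m, rfl, h⟩
      · exact Or.inr ⟨m, rfl, h⟩
    · rintro (⟨m, rfl, h⟩ | ⟨m, rfl, h⟩)
      · exact ⟨m, rfl, h.mono Set.subset_union_left⟩
      · exact ⟨m, rfl, h.mono Set.subset_union_right⟩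
  rw [rsize, rsize, rsize, hset, sInf_union]
end
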